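/- Let g be a metric on an open set U ⊆ ℝ⁴, let X be a smooth vector field on U, and let φ : U → ℝ be smooth. Then pointwise on U one has the commutator identity □_g(Xφ) − X(□_gφ) = (∇_α π̂^{αβ} ∇_β)φ − (1/2)(g_{γδ}π̂^{γδ}) □_gφ, where π̂ is the normalized deformation tensor of X. -/

import Mathlib

noncomputable section

/-- Points of the coordinate chart `ℝ⁴`. -/
abbrev Pt : Type := Fin 4 → ℝ

/-- Coordinate partial derivative `∂_α f`. -/
def pd (α : Fin 4) (f : Pt → ℝ) (x : Pt) : ℝ :=
  fderiv ℝ f x (Pi.single α (1 : ℝ))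

/-- `|g| = |det (g_{αβ})|`. -/
def adet (g : Pt → Matrix (Fin 4) (Fin 4) ℝ) (x : Pt) : ℝ := |(g x).det|

/-- Inverse metric `g^{αβ}`. -/
def ginv (g : Pt → Matrix (Fin 4) (Fin 4) ℝ) (x : Pt) : Matrix (Fin 4) (Fin 4) ℝ := (g x)⁻¹

/-- The wave operator `□_g φ = |g|^{-1/2} ∂_α(|g|^{1/2} g^{αβ} ∂_β φ)`. -/
def boxg (g : Pt → Matrix (Fin 4) (Fin 4) ℝ) (φ : Pt → ℝ) (x : Pt) : ℝ :=
  (Real.sqrt (adet g x))⁻¹ *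
    ∑ α : Fin 4, pd α (fun y => Real.sqrt (adet g y) * ∑ β : Fin 4, ginv g y α β * pd β φ y) x

/-- `X f = X^α ∂_α f`. -/
def Xapp (X : Fin 4 → Pt → ℝ) (f : Pt → ℝ) (x : Pt) : ℝ := ∑ γ : Fin 4, X γ x * pd γ f x

/-- A smooth symmetric everywhere-nondegenerate metric on `U`. -/
structure IsMetricOn (g : Pt → Matrix (Fin 4) (Fin 4) ℝ) (U : Set Pt) : Prop where
  smooth : ∀ α β : Fin 4, ContDiffOn ℝ (⊤ : ℕ∞) (fun x => g x α β) U
  symm : ∀ x ∈ U, ∀ α β : Fin 4, g x α β = g x β α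
  det_ne : ∀ x ∈ U, (g x).det ≠ 0

/-- Deformation tensor `π_{αβ} = (L_X g)_{αβ}` of `X` (lower indices). -/
def piLow (g : Pt → Matrix (Fin 4) (Fin 4) ℝ) (X : Fin 4 → Pt → ℝ) (x : Pt) (α β : Fin 4) : ℝ :=
  (∑ γ : Fin 4, X γ x * pd γ (fun y => g y α β) x)
    + (∑ γ : Fin 4, g x γ β * pd α (X γ) x) + (∑ γ : Fin 4, g x α γ * pd β (X γ) x)

/-- Raised deformation tensor `π^{αβ}`. -/
def piUp (g : Pt → Matrix (Fin 4) (Fin 4) ℝ) (X : Fin 4 → Pt → ℝ) (x : Pt) (α β : Fin 4) : ℝ :=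
  ∑ α' : Fin 4, ∑ β' : Fin 4, ginv g x α α' * ginv g x β β' * piLow g X x α' β'

/-- Normalized deformation tensor `π̂^{αβ} = π^{αβ} - (1/2) g^{αβ} (g_{γδ} π^{γδ})`. -/
def hatPi (g : Pt → Matrix (Fin 4) (Fin 4) ℝ) (X : Fin 4 → Pt → ℝ) (x : Pt) (α β : Fin 4) : ℝ :=
  piUp g X x α β - (1/2) * ginv g x α β * (∑ γ : Fin 4, ∑ δ : Fin 4, g x γ δ * piUp g X x γ δ)

/-- Second-order operator `(∇_α R^{αβ} ∇_β)φ = |g|^{-1/2}∂_α(|g|^{1/2} R^{αβ} ∂_βφ)`. -/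
def divForm (g : Pt → Matrix (Fin 4) (Fin 4) ℝ) (R : Pt → Fin 4 → Fin 4 → ℝ)
    (φ : Pt → ℝ) (x : Pt) : ℝ :=
  (Real.sqrt (adet g x))⁻¹ *
    ∑ α : Fin 4, pd α (fun y => Real.sqrt (adet g y) * ∑ β : Fin 4, R y α β * pd β φ y) x

/-!
Put `w = |g|^{1/2}` and `M = w g⁻¹`, so that `w □_g = ∂_α M^{αβ} ∂_β`. For any smooth field `R`,
the flat operator `D_R = ∂_α R^{αβ} ∂_β` satisfies `[D_R, X] = (div X) D_R - D_{L_X R}`, where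
`L_X R` is the Lie derivative of `R` as a tensor density of weight one: with `V = R ∂φ`, the
difference of the two sides is the divergence of `∂_γ(X^γ V^α - X^α V^γ)`, which vanishes because
the field is antisymmetric and second derivatives commute. Jacobi's formula and the derivative of
the inverse matrix give `X(w) = ½ w tr(g⁻¹ X(g))` and `L_X M = -w π̂`, while
`g_{γδ} π̂^{γδ} = -tr(g⁻¹ X(g)) - 2 div X`; dividing by `w` gives the identity.
-/

open scoped ContDiff Topology Matrix

@[fun_prop]
theorem ContDiffAt.pd {f : Pt → ℝ} {x : Pt} (hf : ContDiffAt ℝ ∞ f x) (a : Fin 4) :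
    ContDiffAt ℝ ∞ (pd a f) x :=
  (hf.fderiv_right (m := ∞) le_rfl).clm_apply contDiffAt_const

@[fun_prop]
theorem ContDiffAt.differentiableAt_infty {f : Pt → ℝ} {x : Pt} (hf : ContDiffAt ℝ ∞ f x) :
    DifferentiableAt ℝ f x :=
  hf.differentiableAt (by simp)

section PartialDerivatives

variable {f h : Pt → ℝ} {x : Pt} {a b : Fin 4}

theorem pd_congr (hfh : f =ᶠ[𝓝 x] h) : pd a f x = pd a h x := by
  rw [pd, pd, hfh.fderiv_eq]

theorem pd_neg (a : Fin 4) (f : Pt → ℝ) : pd a (-f) = -pd a f := by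
  funext x
  simp [pd, fderiv_neg]

theorem pd_add (hf : DifferentiableAt ℝ f x) (hh : DifferentiableAt ℝ h x) :
    pd a (fun y => f y + h y) x = pd a f x + pd a h x := by
  simp [pd, fderiv_fun_add hf hh]

theorem pd_sub (hf : DifferentiableAt ℝ f x) (hh : DifferentiableAt ℝ h x) :
    pd a (fun y => f y - h y) x = pd a f x - pd a h x := by
  simp [pd, fderiv_fun_sub hf hh]

theorem pd_mul (hf : DifferentiableAt ℝ f x) (hh : DifferentiableAt ℝ h x) :
    pd a (fun y => f y * h y) x = pd a f x * h x + f x * pd a h x := by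
  simp [pd, fderiv_fun_mul hf hh]
  ring

theorem pd_sum {ι : Type*} {s : Finset ι} {F : ι → Pt → ℝ}
    (hF : ∀ i ∈ s, DifferentiableAt ℝ (F i) x) :
    pd a (fun y => ∑ i ∈ s, F i y) x = ∑ i ∈ s, pd a (F i) x := by
  simp [pd, fderiv_fun_sum hF]

theorem pd_comm (hf : ContDiffAt ℝ ∞ f x) : pd a (pd b f) x = pd b (pd a f) x := by
  have hdf : DifferentiableAt ℝ (fderiv ℝ f) x :=
    (hf.fderiv_right (m := ∞) le_rfl).differentiableAt (by simp)
  have hsecond : ∀ u v : Fin 4,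
      pd u (pd v f) x = fderiv ℝ (fderiv ℝ f) x (Pi.single u 1) (Pi.single v 1) := fun u v => by
    rw [pd, show pd v f = fun y => fderiv ℝ f y (Pi.single v 1) from rfl,
      fderiv_clm_apply hdf (differentiableAt_const _)]
    simp
  rw [hsecond, hsecond,
    hf.isSymmSndFDerivAt (by simp only [minSmoothness_of_isRCLikeNormedField]; decide)]

end PartialDerivatives

section DirectionalDerivatives

variable {X : Fin 4 → Pt → ℝ} {f h : Pt → ℝ} {x : Pt}

theorem Xapp_eq_fderiv : Xapp X f x = fderiv ℝ f x (fun c => X c x) := by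
  simp only [Xapp, pd]
  rw [show (fun c => X c x) = ∑ c, X c x • Pi.single c (1 : ℝ) by ext; simp [Pi.single_apply],
    map_sum]
  simp

theorem Xapp_congr (hfh : f =ᶠ[𝓝 x] h) : Xapp X f x = Xapp X h x := by
  rw [Xapp_eq_fderiv, Xapp_eq_fderiv, hfh.fderiv_eq]

theorem Xapp_const (c : ℝ) : Xapp X (fun _ => c) x = 0 := by
  simp [Xapp_eq_fderiv]

theorem Xapp_mul (hf : DifferentiableAt ℝ f x) (hh : DifferentiableAt ℝ h x) :
    Xapp X (fun y => f y * h y) x = Xapp X f x * h x + f x * Xapp X h x := by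
  simp [Xapp_eq_fderiv, fderiv_fun_mul hf hh]
  ring

theorem Xapp_const_mul (c : ℝ) (hf : DifferentiableAt ℝ f x) :
    Xapp X (fun y => c * f y) x = c * Xapp X f x := by
  rw [Xapp_mul (differentiableAt_const c) hf, Xapp_const]
  ring

theorem Xapp_sum {ι : Type*} {s : Finset ι} {F : ι → Pt → ℝ}
    (hF : ∀ i ∈ s, DifferentiableAt ℝ (F i) x) :
    Xapp X (fun y => ∑ i ∈ s, F i y) x = ∑ i ∈ s, Xapp X (F i) x := by
  simp [Xapp_eq_fderiv, fderiv_fun_sum hF]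

theorem Xapp_prod {ι : Type*} [DecidableEq ι] {s : Finset ι} {F : ι → Pt → ℝ}
    (hF : ∀ i ∈ s, DifferentiableAt ℝ (F i) x) :
    Xapp X (fun y => ∏ i ∈ s, F i y) x
      = ∑ i ∈ s, (∏ j ∈ s.erase i, F j x) * Xapp X (F i) x := by
  simp [Xapp_eq_fderiv, (HasFDerivAt.finsetProd fun i hi => (hF i hi).hasFDerivAt).fderiv]

theorem Xapp_comp {u : ℝ → ℝ} {u' : ℝ} (hu : HasDerivAt u u' (f x))
    (hf : DifferentiableAt ℝ f x) : Xapp X (fun y => u (f y)) x = u' * Xapp X f x := by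
  have hcomp : HasFDerivAt (fun y => u (f y)) (u' • fderiv ℝ f x) x :=
    hu.comp_hasFDerivAt x hf.hasFDerivAt
  simp [Xapp_eq_fderiv, hcomp.fderiv]

end DirectionalDerivatives

def divergence (V : Fin 4 → Pt → ℝ) (x : Pt) : ℝ := ∑ α : Fin 4, pd α (V α) x

def flux (R : Pt → Fin 4 → Fin 4 → ℝ) (φ : Pt → ℝ) (α : Fin 4) (y : Pt) : ℝ :=
  ∑ β : Fin 4, R y α β * pd β φ y

def coordDivForm (R : Pt → Fin 4 → Fin 4 → ℝ) (φ : Pt → ℝ) : Pt → ℝ := divergence (flux R φ)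

/-- The Lie derivative of `R` as a contravariant 2-tensor density of weight one. -/
def lieDensity (X : Fin 4 → Pt → ℝ) (R : Pt → Fin 4 → Fin 4 → ℝ) (y : Pt) (a b : Fin 4) : ℝ :=
  Xapp X (fun z => R z a b) y - ∑ c : Fin 4, R y c b * pd c (X a) y
    - ∑ c : Fin 4, R y a c * pd c (X b) y + R y a b * divergence X y

section DivergenceForm

variable {U : Set Pt} {X V W : Fin 4 → Pt → ℝ} {R S : Pt → Fin 4 → Fin 4 → ℝ} {f φ : Pt → ℝ}
  {x : Pt}

@[fun_prop]
theorem ContDiffAt.divergence (hV : ∀ α, ContDiffAt ℝ ∞ (V α) x) :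
    ContDiffAt ℝ ∞ (divergence V) x := by
  unfold _root_.divergence
  fun_prop

@[fun_prop]
theorem ContDiffAt.Xapp (hX : ∀ α, ContDiffAt ℝ ∞ (X α) x) (hf : ContDiffAt ℝ ∞ f x) :
    ContDiffAt ℝ ∞ (Xapp X f) x := by
  unfold _root_.Xapp
  fun_prop

@[fun_prop]
theorem ContDiffAt.flux (hR : ∀ a b, ContDiffAt ℝ ∞ (fun y => R y a b) x)
    (hφ : ContDiffAt ℝ ∞ φ x) (α : Fin 4) : ContDiffAt ℝ ∞ (flux R φ α) x := by
  unfold _root_.flux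
  fun_prop

@[fun_prop]
theorem ContDiffAt.coordDivForm (hR : ∀ a b, ContDiffAt ℝ ∞ (fun y => R y a b) x)
    (hφ : ContDiffAt ℝ ∞ φ x) : ContDiffAt ℝ ∞ (coordDivForm R φ) x := by
  unfold _root_.coordDivForm
  fun_prop

@[fun_prop]
theorem ContDiffAt.lieDensity (hX : ∀ a, ContDiffAt ℝ ∞ (X a) x)
    (hR : ∀ a b, ContDiffAt ℝ ∞ (fun y => R y a b) x) (a b : Fin 4) :
    ContDiffAt ℝ ∞ (fun y => lieDensity X R y a b) x := by
  unfold _root_.lieDensity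
  fun_prop

theorem divergence_congr (hU : IsOpen U) (hx : x ∈ U) (h : ∀ α, Set.EqOn (V α) (W α) U) :
    divergence V x = divergence W x :=
  Finset.sum_congr rfl fun α _ => pd_congr (Filter.eventuallyEq_of_mem (hU.mem_nhds hx) (h α))

theorem divergence_add (hV : ∀ α, DifferentiableAt ℝ (V α) x)
    (hW : ∀ α, DifferentiableAt ℝ (W α) x) :
    divergence (fun α y => V α y + W α y) x = divergence V x + divergence W x := by
  simp [divergence, pd_add (hV _) (hW _), Finset.sum_add_distrib]

theorem divergence_sub (hV : ∀ α, DifferentiableAt ℝ (V α) x)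
    (hW : ∀ α, DifferentiableAt ℝ (W α) x) :
    divergence (fun α y => V α y - W α y) x = divergence V x - divergence W x := by
  simp [divergence, pd_sub (hV _) (hW _), Finset.sum_sub_distrib]

theorem divergence_mul (hX : ∀ α, DifferentiableAt ℝ (X α) x) (hf : DifferentiableAt ℝ f x) :
    divergence (fun α y => X α y * f y) x = divergence X x * f x + Xapp X f x := by
  simp only [divergence, Xapp, pd_mul (hX _) hf, Finset.sum_add_distrib, Finset.sum_mul]

theorem divergence_divergence_of_antisymm {A : Fin 4 → Fin 4 → Pt → ℝ}
    (hA : ∀ a b, ContDiffAt ℝ ∞ (A a b) x) (hanti : ∀ a b, A a b = -A b a) :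
    divergence (fun α => divergence fun γ => A γ α) x = 0 := by
  set S := ∑ α : Fin 4, ∑ γ : Fin 4, pd α (pd γ (A γ α)) x
  have hS : divergence (fun α => divergence fun γ => A γ α) x = S :=
    Finset.sum_congr rfl fun α _ => pd_sum fun γ _ => by fun_prop
  have hneg : S = -S :=
    calc S = ∑ γ : Fin 4, ∑ α : Fin 4, pd γ (pd α (A γ α)) x := by
          rw [Finset.sum_comm]
          exact Finset.sum_congr rfl fun γ _ => Finset.sum_congr rfl fun α _ => pd_comm (hA _ _)
      _ = ∑ γ : Fin 4, ∑ α : Fin 4, -pd γ (pd α (A α γ)) x :=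
          Finset.sum_congr rfl fun γ _ => Finset.sum_congr rfl fun α _ => by
            rw [hanti γ α, pd_neg, pd_neg, Pi.neg_apply]
      _ = -S := by simp only [S, Finset.sum_neg_distrib]
  linarith

theorem pd_Xapp (hX : ∀ c, DifferentiableAt ℝ (X c) x) (hφ : ContDiffAt ℝ ∞ φ x) (b : Fin 4) :
    pd b (Xapp X φ) x = Xapp X (pd b φ) x + ∑ c : Fin 4, pd b (X c) x * pd c φ x := by
  rw [show Xapp X φ = fun y => ∑ c : Fin 4, X c y * pd c φ y from rfl,
    pd_sum (F := fun c y => X c y * pd c φ y) fun c _ => (hX c).mul (by fun_prop), Xapp,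
    ← Finset.sum_add_distrib]
  refine Finset.sum_congr rfl fun c _ => ?_
  rw [pd_mul (hX c) (by fun_prop), pd_comm hφ]
  ring

theorem pd_flux (hR : ∀ a b, DifferentiableAt ℝ (fun y => R y a b) x)
    (hφ : ContDiffAt ℝ ∞ φ x) (γ α : Fin 4) :
    pd γ (flux R φ α) x
      = ∑ β : Fin 4, (pd γ (fun y => R y α β) x * pd β φ x + R x α β * pd γ (pd β φ) x) := by
  unfold flux
  rw [pd_sum (F := fun β y => R y α β * pd β φ y) fun β _ => (hR α β).mul (by fun_prop)]
  exact Finset.sum_congr rfl fun β _ => pd_mul (hR α β) (by fun_prop)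

theorem flux_Xapp_add_flux_lieDensity (hR : ∀ a b, ContDiffAt ℝ ∞ (fun y => R y a b) x)
    (hX : ∀ a, ContDiffAt ℝ ∞ (X a) x) (hφ : ContDiffAt ℝ ∞ φ x) (α : Fin 4) :
    flux R (Xapp X φ) α x + flux (lieDensity X R) φ α x
      = divergence (fun γ y => X γ y * flux R φ α y - X α y * flux R φ γ y) x
        + X α x * coordDivForm R φ x := by
  have hbivector : ∀ γ, pd γ (fun y => X γ y * flux R φ α y - X α y * flux R φ γ y) x
      = pd γ (X γ) x * flux R φ α x + X γ x * pd γ (flux R φ α) x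
        - (pd γ (X α) x * flux R φ γ x + X α x * pd γ (flux R φ γ) x) := fun γ => by
    rw [pd_sub (by fun_prop) (by fun_prop), pd_mul (by fun_prop) (by fun_prop),
      pd_mul (by fun_prop) (by fun_prop)]
  simp only [divergence, coordDivForm, hbivector,
    pd_flux (fun a b => (hR a b).differentiableAt_infty) hφ]
  simp only [flux, lieDensity, pd_Xapp (fun c => (hX c).differentiableAt_infty) hφ]
  simp only [Xapp, divergence, Fin.sum_univ_four]
  ring

theorem coordDivForm_Xapp_sub_Xapp_coordDivForm (hU : IsOpen U)
    (hR : ∀ a b, ContDiffOn ℝ ∞ (fun y => R y a b) U) (hX : ∀ a, ContDiffOn ℝ ∞ (X a) U)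
    (hφ : ContDiffOn ℝ ∞ φ U) (hx : x ∈ U) :
    coordDivForm R (Xapp X φ) x - Xapp X (coordDivForm R φ) x
      = divergence X x * coordDivForm R φ x - coordDivForm (lieDensity X R) φ x := by
  have hRU : ∀ y ∈ U, ∀ a b, ContDiffAt ℝ ∞ (fun y => R y a b) y :=
    fun y hy a b => (hR a b).contDiffAt (hU.mem_nhds hy)
  have hXU : ∀ y ∈ U, ∀ a, ContDiffAt ℝ ∞ (X a) y :=
    fun y hy a => (hX a).contDiffAt (hU.mem_nhds hy)
  have hφU : ∀ y ∈ U, ContDiffAt ℝ ∞ φ y := fun y hy => hφ.contDiffAt (hU.mem_nhds hy)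
  set B : Fin 4 → Fin 4 → Pt → ℝ := fun γ α y => X γ y * flux R φ α y - X α y * flux R φ γ y
  have hflux : ∀ α, Set.EqOn (flux R (Xapp X φ) α) (fun y => (divergence (fun γ => B γ α) y
      + X α y * coordDivForm R φ y) - flux (lieDensity X R) φ α y) U := fun α y hy =>
    eq_sub_of_add_eq (flux_Xapp_add_flux_lieDensity (hRU y hy) (hXU y hy) (hφU y hy) α)
  have hRx := hRU x hx
  have hXx := hXU x hx
  have hφx := hφU x hx
  have hB : divergence (fun α => divergence fun γ => B γ α) x = 0 :=
    divergence_divergence_of_antisymm (fun a b => by fun_prop)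
      (fun a b => by funext y; simp only [B, Pi.neg_apply]; ring)
  rw [coordDivForm, divergence_congr hU hx hflux,
    divergence_sub (fun _ => by fun_prop) (fun _ => by fun_prop),
    divergence_add (fun _ => by fun_prop) (fun _ => by fun_prop), hB,
    divergence_mul (fun _ => by fun_prop) (by fun_prop)]
  unfold coordDivForm
  ring

theorem coordDivForm_congr (hU : IsOpen U) (hx : x ∈ U) (h : ∀ y ∈ U, ∀ a b, R y a b = S y a b) :
    coordDivForm R φ x = coordDivForm S φ x :=
  divergence_congr hU hx fun _ y hy => Finset.sum_congr rfl fun β _ => by rw [h y hy]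

theorem coordDivForm_neg (R : Pt → Fin 4 → Fin 4 → ℝ) (φ : Pt → ℝ) (x : Pt) :
    coordDivForm (fun y a b => -R y a b) φ x = -coordDivForm R φ x := by
  have hflux : flux (fun y a b => -R y a b) φ = fun α => -flux R φ α := by
    funext α y
    simp [flux]
  simp [coordDivForm, divergence, hflux, pd_neg]

end DivergenceForm

theorem divForm_eq_inv_mul_coordDivForm (g : Pt → Matrix (Fin 4) (Fin 4) ℝ)
    (R : Pt → Fin 4 → Fin 4 → ℝ) (φ : Pt → ℝ) (x : Pt) :
    divForm g R φ x
      = (√(adet g x))⁻¹ * coordDivForm (fun y a b => √(adet g y) * R y a b) φ x := by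
  unfold divForm coordDivForm divergence flux
  simp only [Finset.mul_sum, mul_assoc]

def matDeriv (X : Fin 4 → Pt → ℝ) (A : Pt → Matrix (Fin 4) (Fin 4) ℝ) (x : Pt) :
    Matrix (Fin 4) (Fin 4) ℝ :=
  Matrix.of fun a b => Xapp X (fun y => A y a b) x

def jacobian (X : Fin 4 → Pt → ℝ) (x : Pt) : Matrix (Fin 4) (Fin 4) ℝ :=
  Matrix.of fun a c => pd c (X a) x

section MatrixCalculus

variable {X : Fin 4 → Pt → ℝ} {f : Pt → ℝ} {A B M : Pt → Matrix (Fin 4) (Fin 4) ℝ} {x : Pt}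

theorem contDiffAt_det (hM : ∀ a b, ContDiffAt ℝ ∞ (fun y => M y a b) x) :
    ContDiffAt ℝ ∞ (fun y => (M y).det) x := by
  simp only [Matrix.det_apply']
  fun_prop

theorem contDiffAt_inv_entry (hM : ∀ a b, ContDiffAt ℝ ∞ (fun y => M y a b) x)
    (hdet : (M x).det ≠ 0) (a b : Fin 4) : ContDiffAt ℝ ∞ (fun y => (M y)⁻¹ a b) x := by
  have hadj : ∀ c d, ContDiffAt ℝ ∞ (fun y => (M y).updateRow b (Pi.single a 1) c d) x := by
    intro c d
    by_cases hc : c = b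
    · simp only [Matrix.updateRow_apply, hc, if_true]
      exact contDiffAt_const
    · simpa only [Matrix.updateRow_apply, hc, if_false] using hM c d
  simp only [Matrix.inv_def, Ring.inverse_eq_inv', Matrix.smul_apply, Matrix.adjugate_apply,
    smul_eq_mul]
  exact ((contDiffAt_det hM).inv hdet).mul (contDiffAt_det hadj)

theorem matDeriv_mul (hA : ∀ a b, DifferentiableAt ℝ (fun y => A y a b) x)
    (hB : ∀ a b, DifferentiableAt ℝ (fun y => B y a b) x) :
    matDeriv X (fun y => A y * B y) x = matDeriv X A x * B x + A x * matDeriv X B x := by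
  ext a b
  simp only [matDeriv, Matrix.mul_apply, Matrix.of_apply, Matrix.add_apply]
  rw [Xapp_sum (F := fun k y => A y a k * B y k b) fun k _ => (hA a k).mul (hB k b)]
  simp only [Xapp_mul (hA _ _) (hB _ _), Finset.sum_add_distrib]

theorem matDeriv_smul (hf : DifferentiableAt ℝ f x)
    (hA : ∀ a b, DifferentiableAt ℝ (fun y => A y a b) x) :
    matDeriv X (fun y => f y • A y) x = Xapp X f x • A x + f x • matDeriv X A x := by
  ext a b
  simp [matDeriv, Xapp_mul hf (hA a b)]

theorem prod_updateCol_perm {n R : Type*} [Fintype n] [DecidableEq n] [CommMonoid R]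
    (N : Matrix n n R) (v : n → R) (σ : Equiv.Perm n) (i : n) :
    ∏ j, N.updateCol i v (σ j) j = (∏ j ∈ Finset.univ.erase i, N (σ j) j) * v (σ i) := by
  rw [← Finset.prod_erase_mul _ _ (Finset.mem_univ i), Matrix.updateCol_self]
  congr 1
  exact Finset.prod_congr rfl fun j hj => Matrix.updateCol_ne (Finset.ne_of_mem_erase hj)

/-- Jacobi's formula. Differentiating the Leibniz expansion gives the sum over `i` of the
determinants of `M` with column `i` replaced by its derivative; Cramer's rule evaluates them. -/
theorem Xapp_det (hM : ∀ a b, DifferentiableAt ℝ (fun y => M y a b) x)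
    (hdet : IsUnit (M x).det) :
    Xapp X (fun y => (M y).det) x = (M x).det * Matrix.trace ((M x)⁻¹ * matDeriv X M x) := by
  set D := matDeriv X M x
  have hprod : ∀ σ : Equiv.Perm (Fin 4), DifferentiableAt ℝ (fun y => ∏ i, M y (σ i) i) x :=
    fun σ => by fun_prop
  have hterm : ∀ σ : Equiv.Perm (Fin 4),
      Xapp X (fun y => (Equiv.Perm.sign σ : ℝ) * ∏ i, M y (σ i) i) x
        = ∑ i, (Equiv.Perm.sign σ : ℝ) * ∏ j, (M x).updateCol i (fun a => D a i) (σ j) j := by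
    intro σ
    rw [Xapp_const_mul _ (hprod σ), Xapp_prod fun i _ => hM _ _, Finset.mul_sum]
    simp only [prod_updateCol_perm]
    rfl
  have hcol : ∀ i, ((M x).updateCol i fun a => D a i).det = (M x).det * ((M x)⁻¹ * D) i i := by
    intro i
    rw [← Matrix.cramer_apply, ← Matrix.det_smul_inv_mulVec_eq_cramer _ _ hdet]
    simp [Matrix.mulVec, dotProduct, Matrix.mul_apply]
  calc Xapp X (fun y => (M y).det) x
      = ∑ σ : Equiv.Perm (Fin 4),
          Xapp X (fun y => (Equiv.Perm.sign σ : ℝ) * ∏ i, M y (σ i) i) x := by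
        simp only [Matrix.det_apply']
        exact Xapp_sum fun σ _ => (hprod σ).const_mul _
    _ = ∑ i, ((M x).updateCol i fun a => D a i).det := by
        simp only [hterm, Matrix.det_apply']
        exact Finset.sum_comm
    _ = (M x).det * Matrix.trace ((M x)⁻¹ * D) := by
        simp only [hcol, ← Finset.mul_sum]
        rfl

end MatrixCalculus

theorem sum_mul_entries_eq_trace {n R : Type*} [Fintype n] [CommSemiring R] (A : Matrix n n R)
    (B : n → n → R) :
    ∑ i, ∑ j, A i j * B i j = Matrix.trace (Aᵀ * Matrix.of B) := by
  simp only [Matrix.trace, Matrix.diag, Matrix.mul_apply, Matrix.transpose_apply]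
  exact Finset.sum_comm

section DeformationTensor

variable (g : Pt → Matrix (Fin 4) (Fin 4) ℝ) (X : Fin 4 → Pt → ℝ) (x : Pt)

theorem of_lieDensity (R : Pt → Matrix (Fin 4) (Fin 4) ℝ) :
    Matrix.of (lieDensity X R x)
      = matDeriv X R x - jacobian X x * R x - R x * (jacobian X x)ᵀ + divergence X x • R x := by
  ext a b
  simp [lieDensity, matDeriv, jacobian, Matrix.mul_apply, mul_comm]

theorem of_piLow :
    Matrix.of (piLow g X x) = matDeriv X g x + (jacobian X x)ᵀ * g x + g x * jacobian X x := by
  ext a b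
  simp [piLow, matDeriv, jacobian, Xapp, Matrix.mul_apply, mul_comm]

theorem of_piUp : Matrix.of (piUp g X x) = ginv g x * Matrix.of (piLow g X x) * (ginv g x)ᵀ := by
  ext a b
  simp only [piUp, Matrix.of_apply, Matrix.mul_apply, Matrix.transpose_apply, Finset.sum_mul]
  rw [Finset.sum_comm]
  exact Finset.sum_congr rfl fun _ _ => Finset.sum_congr rfl fun _ _ => by ring

theorem of_hatPi :
    Matrix.of (hatPi g X x) = Matrix.of (piUp g X x)
      - ((1 / 2 : ℝ) * ∑ γ, ∑ δ, g x γ δ * piUp g X x γ δ) • ginv g x := by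
  ext a b
  simp [hatPi]
  ring

end DeformationTensor

section Metric

variable {U : Set Pt} {g : Pt → Matrix (Fin 4) (Fin 4) ℝ} {X : Fin 4 → Pt → ℝ} {x : Pt}

namespace IsMetricOn

theorem isUnit_det (hg : IsMetricOn g U) (hx : x ∈ U) : IsUnit (g x).det :=
  isUnit_iff_ne_zero.2 (hg.det_ne x hx)

theorem ginv_mul (hg : IsMetricOn g U) (hx : x ∈ U) : ginv g x * g x = 1 :=
  Matrix.nonsing_inv_mul _ (hg.isUnit_det hx)

theorem mul_ginv (hg : IsMetricOn g U) (hx : x ∈ U) : g x * ginv g x = 1 :=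
  Matrix.mul_nonsing_inv _ (hg.isUnit_det hx)

theorem transpose_eq (hg : IsMetricOn g U) (hx : x ∈ U) : (g x)ᵀ = g x := by
  ext a b
  exact hg.symm x hx b a

theorem ginv_transpose (hg : IsMetricOn g U) (hx : x ∈ U) : (ginv g x)ᵀ = ginv g x := by
  rw [ginv, Matrix.transpose_nonsing_inv, hg.transpose_eq hx]

theorem contDiffAt_entry (hg : IsMetricOn g U) (hU : IsOpen U) (hx : x ∈ U) (a b : Fin 4) :
    ContDiffAt ℝ ∞ (fun y => g y a b) x :=
  (hg.smooth a b).contDiffAt (hU.mem_nhds hx)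

theorem contDiffAt_ginv (hg : IsMetricOn g U) (hU : IsOpen U) (hx : x ∈ U) (a b : Fin 4) :
    ContDiffAt ℝ ∞ (fun y => ginv g y a b) x :=
  contDiffAt_inv_entry (hg.contDiffAt_entry hU hx) (hg.det_ne x hx) a b

theorem contDiffAt_sqrt_adet (hg : IsMetricOn g U) (hU : IsOpen U) (hx : x ∈ U) :
    ContDiffAt ℝ ∞ (fun y => √(adet g y)) x :=
  (Real.contDiffAt_sqrt (abs_pos.2 (hg.det_ne x hx)).ne').comp x
    ((contDiffAt_det (hg.contDiffAt_entry hU hx)).abs (hg.det_ne x hx))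

theorem sqrt_adet_pos (hg : IsMetricOn g U) (hx : x ∈ U) : 0 < √(adet g x) :=
  Real.sqrt_pos.2 (abs_pos.2 (hg.det_ne x hx))

end IsMetricOn

theorem matDeriv_ginv (hg : IsMetricOn g U) (hU : IsOpen U) (hx : x ∈ U) :
    matDeriv X (ginv g) x = -(ginv g x * matDeriv X g x * ginv g x) := by
  have hconst : matDeriv X (fun y => ginv g y * g y) x = 0 := by
    ext a b
    have hone : (fun y => (ginv g y * g y) a b) =ᶠ[𝓝 x]
        fun _ => (1 : Matrix (Fin 4) (Fin 4) ℝ) a b :=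
      Filter.eventually_of_mem (hU.mem_nhds hx) fun y hy =>
        congrFun (congrFun (hg.ginv_mul hy) a) b
    simp [matDeriv, Xapp_congr hone, Xapp_const]
  rw [matDeriv_mul (fun a b => (hg.contDiffAt_ginv hU hx a b).differentiableAt_infty)
    (fun a b => (hg.contDiffAt_entry hU hx a b).differentiableAt_infty)] at hconst
  calc matDeriv X (ginv g) x = matDeriv X (ginv g) x * (g x * ginv g x) := by
        rw [hg.mul_ginv hx, Matrix.mul_one]
    _ = (matDeriv X (ginv g) x * g x + ginv g x * matDeriv X g x) * ginv g x
          - ginv g x * matDeriv X g x * ginv g x := by noncomm_ring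
    _ = -(ginv g x * matDeriv X g x * ginv g x) := by rw [hconst]; noncomm_ring

theorem Xapp_sqrt_adet (hg : IsMetricOn g U) (hU : IsOpen U) (hx : x ∈ U) :
    Xapp X (fun y => √(adet g y)) x
      = 1 / 2 * √(adet g x) * Matrix.trace (ginv g x * matDeriv X g x) := by
  have hd := hg.det_ne x hx
  have hu : HasDerivAt (fun t => √|t|) (1 / (2 * √|(g x).det|) * SignType.sign (g x).det)
      (g x).det :=
    (Real.hasDerivAt_sqrt (abs_pos.2 hd).ne').comp _ (hasDerivAt_abs hd)
  have hsq : √|(g x).det| * √|(g x).det| = SignType.sign (g x).det * (g x).det := by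
    rw [Real.mul_self_sqrt (abs_nonneg _), sign_mul_self]
  have hpos : 0 < √|(g x).det| := hg.sqrt_adet_pos hx
  simp only [adet]
  rw [Xapp_comp hu (contDiffAt_det (hg.contDiffAt_entry hU hx)).differentiableAt_infty,
    Xapp_det (fun a b => (hg.contDiffAt_entry hU hx a b).differentiableAt_infty)
      (hg.isUnit_det hx), ginv]
  field_simp
  linear_combination -Matrix.trace ((g x)⁻¹ * matDeriv X g x) * hsq

theorem Xapp_inv_sqrt_adet (hg : IsMetricOn g U) (hU : IsOpen U) (hx : x ∈ U) :
    Xapp X (fun y => (√(adet g y))⁻¹) x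
      = -(1 / 2) * (√(adet g x))⁻¹ * Matrix.trace (ginv g x * matDeriv X g x) := by
  have hw := (hg.sqrt_adet_pos hx).ne'
  rw [Xapp_comp (hasDerivAt_inv hw) (hg.contDiffAt_sqrt_adet hU hx).differentiableAt_infty,
    Xapp_sqrt_adet hg hU hx]
  field_simp

theorem of_piUp_of_isMetricOn (hg : IsMetricOn g U) (hx : x ∈ U) :
    Matrix.of (piUp g X x) = ginv g x * matDeriv X g x * ginv g x
      + ginv g x * (jacobian X x)ᵀ + jacobian X x * ginv g x := by
  rw [of_piUp, of_piLow, hg.ginv_transpose hx]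
  calc ginv g x * (matDeriv X g x + (jacobian X x)ᵀ * g x + g x * jacobian X x) * ginv g x
      = ginv g x * matDeriv X g x * ginv g x + ginv g x * (jacobian X x)ᵀ * (g x * ginv g x)
        + ginv g x * g x * jacobian X x * ginv g x := by noncomm_ring
    _ = _ := by rw [hg.mul_ginv hx, hg.ginv_mul hx, Matrix.mul_one, Matrix.one_mul]

theorem sum_mul_piUp (hg : IsMetricOn g U) (hx : x ∈ U) :
    ∑ γ, ∑ δ, g x γ δ * piUp g X x γ δ
      = Matrix.trace (ginv g x * matDeriv X g x) + 2 * divergence X x := by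
  rw [sum_mul_entries_eq_trace, of_piUp_of_isMetricOn hg hx, hg.transpose_eq hx,
    show divergence X x = Matrix.trace (jacobian X x) from rfl]
  simp only [Matrix.mul_add, Matrix.trace_add, ← Matrix.mul_assoc, hg.mul_ginv hx, Matrix.one_mul,
    Matrix.trace_transpose]
  rw [Matrix.trace_mul_comm (g x * jacobian X x), ← Matrix.mul_assoc, hg.ginv_mul hx,
    Matrix.one_mul, Matrix.trace_mul_comm]
  ring

theorem sum_mul_hatPi (hg : IsMetricOn g U) (hx : x ∈ U) :
    ∑ γ, ∑ δ, g x γ δ * hatPi g X x γ δ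
      = -(Matrix.trace (ginv g x * matDeriv X g x) + 2 * divergence X x) := by
  rw [sum_mul_entries_eq_trace, of_hatPi, Matrix.mul_sub, Matrix.trace_sub, Matrix.mul_smul,
    Matrix.trace_smul, ← sum_mul_entries_eq_trace, sum_mul_piUp hg hx, hg.transpose_eq hx,
    hg.mul_ginv hx, Matrix.trace_one]
  simp
  ring

theorem of_lieDensity_sqrt_adet_ginv (hg : IsMetricOn g U) (hU : IsOpen U) (hx : x ∈ U) :
    Matrix.of (lieDensity X (fun y a b => √(adet g y) * ginv g y a b) x)
      = -(√(adet g x) • Matrix.of (hatPi g X x)) := by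
  rw [show (fun y a b => √(adet g y) * ginv g y a b : Pt → Fin 4 → Fin 4 → ℝ)
      = fun y => √(adet g y) • ginv g y from rfl, of_lieDensity,
    matDeriv_smul (hg.contDiffAt_sqrt_adet hU hx).differentiableAt_infty
      (fun a b => (hg.contDiffAt_ginv hU hx a b).differentiableAt_infty),
    Xapp_sqrt_adet hg hU hx, matDeriv_ginv hg hU hx, of_hatPi, sum_mul_piUp hg hx,
    of_piUp_of_isMetricOn hg hx]
  simp only [Matrix.mul_smul, Matrix.smul_mul]
  module

end Metric

/-- the commutator identity
`[□_g , X]φ = (∇_α π̂^{αβ} ∇_β)φ - (1/2) trace(π̂) □_g φ`. -/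
theorem box_commutator_identity
    (U : Set Pt) (hU : IsOpen U)
    (g : Pt → Matrix (Fin 4) (Fin 4) ℝ) (hg : IsMetricOn g U)
    (X : Fin 4 → Pt → ℝ) (hX : ∀ α, ContDiffOn ℝ (⊤ : ℕ∞) (X α) U)
    (φ : Pt → ℝ) (hφ : ContDiffOn ℝ (⊤ : ℕ∞) φ U) :
    ∀ x ∈ U,
      boxg g (Xapp X φ) x - Xapp X (boxg g φ) x
        = divForm g (fun y α β => hatPi g X y α β) φ x
          - (1/2) * (∑ γ : Fin 4, ∑ δ : Fin 4, g x γ δ * hatPi g X x γ δ) * boxg g φ x := by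
  intro x hx
  set M : Pt → Fin 4 → Fin 4 → ℝ := fun y a b => √(adet g y) * ginv g y a b
  have hM : ∀ a b, ContDiffOn ℝ ∞ (fun y => M y a b) U := fun a b y hy =>
    ((hg.contDiffAt_sqrt_adet hU hy).mul (hg.contDiffAt_ginv hU hy a b)).contDiffWithinAt
  have hbox : ∀ ψ, boxg g ψ = fun y => (√(adet g y))⁻¹ * coordDivForm M ψ y :=
    fun ψ => funext (divForm_eq_inv_mul_coordDivForm g (fun y => ginv g y) ψ)
  have hlie : coordDivForm (lieDensity X M) φ x
      = -coordDivForm (fun y a b => √(adet g y) * hatPi g X y a b) φ x := by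
    rw [← coordDivForm_neg]
    exact coordDivForm_congr hU hx fun y hy a b =>
      congrFun (congrFun (of_lieDensity_sqrt_adet_ginv hg hU hy) a) b
  have hnat := coordDivForm_Xapp_sub_Xapp_coordDivForm hU hM hX hφ hx
  have hMx := fun a b => (hM a b).contDiffAt (hU.mem_nhds hx)
  have hφx := hφ.contDiffAt (hU.mem_nhds hx)
  simp only [hbox]
  rw [divForm_eq_inv_mul_coordDivForm, sum_mul_hatPi hg hx,
    Xapp_mul ((hg.contDiffAt_sqrt_adet hU hx).differentiableAt_infty.fun_inv
      (hg.sqrt_adet_pos hx).ne') (by fun_prop),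
    Xapp_inv_sqrt_adet hg hU hx]
  rw [hlie] at hnat
  linear_combination (√(adet g x))⁻¹ * hnat
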